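/- arXiv:2407.12225 — 3 statements merged into one kernel-verified Lean document; each statement's English description precedes it below -/
import Mathlib

section
/- Let f : ℝⁿ → ℝⁿ be continuously differentiable and P symmetric positive definite. If for every z ∈ ℝⁿ the Jacobian satisfies (Df(z))ᵀP + P·Df(z) ⪯ 2c·P, then f is one-sided Lipschitz in the P-weighted inner product: for all x, y ∈ ℝⁿ, (x − y)ᵀ P (f(x) − f(y)) ≤ c·(x − y)ᵀ P (x − y). -/
/-!
Write `v = x - y`. Evaluating the LMI on `v` bounds the directional derivative
`z ↦ vᵀ P (Df(z) v)` of `vᵀ P f` by `c vᵀ P v` everywhere; the mean value inequality along the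
segment from `y` to `x` turns this into the bound on `vᵀ P (f x - f y)`.
-/

open Matrix

theorem dotProduct_mulVec_le_of_posSemidef {ι : Type*} [Fintype ι] {P A : Matrix ι ι ℝ}
    (hP : P.IsSymm) {c : ℝ} (hLMI : ((2 * c) • P - (Aᵀ * P + P * A)).PosSemidef) (v : ι → ℝ) :
    v ⬝ᵥ (P *ᵥ (A *ᵥ v)) ≤ c * (v ⬝ᵥ (P *ᵥ v)) := by
  have hquad := hLMI.dotProduct_mulVec_nonneg v
  have htranspose : v ⬝ᵥ (Aᵀ *ᵥ (P *ᵥ v)) = v ⬝ᵥ (P *ᵥ (A *ᵥ v)) := by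
    rw [dotProduct_mulVec, vecMul_transpose, dotProduct_mulVec, ← mulVec_transpose, hP.eq,
      dotProduct_comm]
  simp only [star_trivial, sub_mulVec, add_mulVec, dotProduct_sub, dotProduct_add, smul_mulVec,
    dotProduct_smul, ← mulVec_mulVec, htranspose, smul_eq_mul] at hquad
  linarith

theorem ContinuousLinearMap.map_sub_le_of_hasFDerivAt {E F : Type*} [NormedAddCommGroup E]
    [NormedSpace ℝ E] [NormedAddCommGroup F] [NormedSpace ℝ F] {f : E → F} {f' : E → E →L[ℝ] F}
    (hf : ∀ z, HasFDerivAt f (f' z) z) (L : F →L[ℝ] ℝ) {x y : E} {K : ℝ}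
    (hK : ∀ z, L (f' z (x - y)) ≤ K) : L (f x - f y) ≤ K := by
  set g : ℝ → ℝ := fun t => L (f (y + t • (x - y)))
  have hg : ∀ t, HasDerivAt g (L (f' (y + t • (x - y)) (x - y))) t := fun t => by
    have hline : HasDerivAt (fun t : ℝ => y + t • (x - y)) (x - y) t := by
      simpa using ((hasDerivAt_id t).smul_const (x - y)).const_add y
    exact L.hasFDerivAt.comp_hasDerivAt t ((hf _).comp_hasDerivAt t hline)
  have := image_sub_le_mul_sub_of_deriv_le (fun t => (hg t).differentiableAt)
    (fun t => (hg t).deriv ▸ hK _) zero_le_one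
  simpa [g] using this

theorem stmt_5_general {n : ℕ} (f : (Fin n → ℝ) → (Fin n → ℝ))
    (J : (Fin n → ℝ) → Matrix (Fin n) (Fin n) ℝ)
    (hf : ∀ z, HasFDerivAt f ((J z).mulVecLin).toContinuousLinearMap z)
    (P : Matrix (Fin n) (Fin n) ℝ) (hPsymm : P.IsSymm) (c : ℝ)
    (hLMI : ∀ z, ((2 * c) • P - ((J z)ᵀ * P + P * (J z))).PosSemidef) :
    ∀ x y : Fin n → ℝ,
      (x - y) ⬝ᵥ (P *ᵥ (f x - f y)) ≤ c * ((x - y) ⬝ᵥ (P *ᵥ (x - y))) := fun x y =>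
  ContinuousLinearMap.map_sub_le_of_hasFDerivAt hf
    (dotProductBilin ℝ ℝ (x - y) ∘ₗ P.mulVecLin).toContinuousLinearMap
    fun z => dotProduct_mulVec_le_of_posSemidef hPsymm (hLMI z) (x - y)

/-- Demidovich condition: if the Jacobian `J z` of a `C¹` map `f` satisfies
the LMI `(J z)ᵀ P + P (J z) ⪯ 2cP` at every point, then `f` is one-sided
Lipschitz with constant `c` in the `P`-weighted inner product. -/
theorem stmt_5 {n : ℕ} (f : (Fin n → ℝ) → (Fin n → ℝ))
    (J : (Fin n → ℝ) → Matrix (Fin n) (Fin n) ℝ)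
    (hf : ∀ z, HasFDerivAt f ((J z).mulVecLin).toContinuousLinearMap z)
    (hJcont : Continuous J)
    (P : Matrix (Fin n) (Fin n) ℝ) (hPsymm : P.IsSymm) (hP : P.PosDef) (c : ℝ)
    (hLMI : ∀ z, ((2 * c) • P - ((J z)ᵀ * P + P * (J z))).PosSemidef) :
    ∀ x y : Fin n → ℝ,
      (x - y) ⬝ᵥ (P *ᵥ (f x - f y)) ≤ c * ((x - y) ⬝ᵥ (P *ᵥ (x - y))) :=
  stmt_5_general f J hf P hPsymm c hLMI
end

section
/- Let f : ℝⁿ → ℝⁿ satisfy the one-sided Lipschitz condition ⟨x − y, f(x) − f(y)⟩_P ≤ c‖x − y‖²_P for all x, y (where ⟨u,v⟩_P = uᵀPv and ‖u‖²_P = uᵀPu, P symmetric positive definite). If x, y : [0,∞) → ℝⁿ are differentiable solutions of ẋ = f(x) and ẏ = f(y), then ‖x(t) − y(t)‖_P ≤ e^{ct}‖x(0) − y(0)‖_P for all t ≥ 0. -/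
/-!
Along two solutions the `P`-weighted squared distance `V t = ‖x t - y t‖²_P` has derivative
`2 ⟨x - y, f x - f y⟩_P` (symmetry of `P` merges the two terms of the product rule), which the
one-sided Lipschitz condition bounds by `2 c V`. Grönwall's inequality then gives
`V t ≤ e^{2ct} V 0`, and taking square roots yields the estimate.
-/

open Matrix Set Real

section Derivatives

variable {𝕜 ι : Type*} [NontriviallyNormedField 𝕜] [Fintype ι]
  {u v : 𝕜 → ι → 𝕜} {u' v' : ι → 𝕜} {t : 𝕜}

theorem HasDerivAt.dotProduct (hu : HasDerivAt u u' t) (hv : HasDerivAt v v' t) :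
    HasDerivAt (fun s => u s ⬝ᵥ v s) (u' ⬝ᵥ v t + u t ⬝ᵥ v') t := by
  have := HasDerivAt.fun_sum (u := Finset.univ) fun i _ =>
    (hasDerivAt_pi.mp hu i).fun_mul (hasDerivAt_pi.mp hv i)
  rwa [Finset.sum_add_distrib] at this

theorem HasDerivAt.mulVec (P : Matrix ι ι 𝕜) (hv : HasDerivAt v v' t) :
    HasDerivAt (fun s => P *ᵥ v s) (P *ᵥ v') t :=
  hasDerivAt_pi.mpr fun i =>
    HasDerivAt.fun_sum (u := Finset.univ) fun j _ => (hasDerivAt_pi.mp hv j).const_mul (P i j)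

theorem Matrix.IsSymm.dotProduct_mulVec_comm {P : Matrix ι ι 𝕜} (hP : P.IsSymm) (u v : ι → 𝕜) :
    u ⬝ᵥ (P *ᵥ v) = v ⬝ᵥ (P *ᵥ u) := by
  rw [dotProduct_mulVec, ← mulVec_transpose, hP.eq, dotProduct_comm]

theorem Matrix.IsSymm.hasDerivAt_dotProduct_mulVec_self {P : Matrix ι ι 𝕜} (hP : P.IsSymm)
    (hv : HasDerivAt v v' t) :
    HasDerivAt (fun s => v s ⬝ᵥ (P *ᵥ v s)) (2 * (v t ⬝ᵥ (P *ᵥ v'))) t := by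
  have := hv.dotProduct (hv.mulVec P)
  rwa [hP.dotProduct_mulVec_comm v', ← two_mul] at this

end Derivatives

theorem le_mul_exp_of_deriv_le_mul {f f' : ℝ → ℝ} {K a b : ℝ} (hf : ContinuousOn f (Icc a b))
    (hf' : ∀ x ∈ Ico a b, HasDerivWithinAt f (f' x) (Ici x) x)
    (bound : ∀ x ∈ Ico a b, f' x ≤ K * f x) :
    ∀ x ∈ Icc a b, f x ≤ f a * exp (K * (x - a)) := by
  intro x hx
  rw [← gronwallBound_ε0]
  exact le_gronwallBound_of_liminf_deriv_right_le hf
    (fun x hx _ hr => (hf' x hx).liminf_right_slope_le hr) le_rfl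
    (fun x hx => by simpa using bound x hx) x hx

theorem stmt_6_general {n : ℕ} (f : (Fin n → ℝ) → (Fin n → ℝ))
    (P : Matrix (Fin n) (Fin n) ℝ) (hPsymm : P.IsSymm) (c : ℝ)
    (hOSL : ∀ x y : Fin n → ℝ,
      (x - y) ⬝ᵥ (P *ᵥ (f x - f y)) ≤ c * ((x - y) ⬝ᵥ (P *ᵥ (x - y))))
    (x y : ℝ → (Fin n → ℝ))
    (hx : ∀ t, HasDerivAt x (f (x t)) t) (hy : ∀ t, HasDerivAt y (f (y t)) t) :
    ∀ t ≥ (0 : ℝ),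
      Real.sqrt ((x t - y t) ⬝ᵥ (P *ᵥ (x t - y t)))
        ≤ Real.exp (c * t) * Real.sqrt ((x 0 - y 0) ⬝ᵥ (P *ᵥ (x 0 - y 0))) := by
  intro t ht
  set V : ℝ → ℝ := fun s => (x s - y s) ⬝ᵥ (P *ᵥ (x s - y s))
  have hV : ∀ s, HasDerivAt V (2 * ((x s - y s) ⬝ᵥ (P *ᵥ (f (x s) - f (y s))))) s :=
    fun s => hPsymm.hasDerivAt_dotProduct_mulVec_self ((hx s).sub (hy s))
  have hVt : V t ≤ V 0 * exp (2 * c * (t - 0)) :=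
    le_mul_exp_of_deriv_le_mul (fun s _ => (hV s).continuousAt.continuousWithinAt)
      (fun s _ => (hV s).hasDerivWithinAt) (fun s _ => by linarith [hOSL (x s) (y s)])
      t ⟨ht, le_rfl⟩
  calc √(V t) ≤ √(V 0 * exp (2 * c * (t - 0))) := Real.sqrt_le_sqrt hVt
    _ = exp (c * t) * √(V 0) := by
      rw [Real.sqrt_mul' _ (exp_nonneg _), sub_zero, show 2 * c * t = c * t + c * t by ring,
        exp_add, Real.sqrt_mul_self (exp_nonneg _), mul_comm]

/-- Contraction estimate: if `f` is one-sided Lipschitz with constant `c` in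
the `P`-weighted inner product and `x, y` solve `ẋ = f(x)`, `ẏ = f(y)`, then
`‖x(t) - y(t)‖_P ≤ e^{ct} ‖x(0) - y(0)‖_P` for all `t ≥ 0`. -/
theorem stmt_6 {n : ℕ} (f : (Fin n → ℝ) → (Fin n → ℝ)) (hf : Continuous f)
    (P : Matrix (Fin n) (Fin n) ℝ) (hPsymm : P.IsSymm) (hP : P.PosDef) (c : ℝ)
    (hOSL : ∀ x y : Fin n → ℝ,
      (x - y) ⬝ᵥ (P *ᵥ (f x - f y)) ≤ c * ((x - y) ⬝ᵥ (P *ᵥ (x - y))))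
    (x y : ℝ → (Fin n → ℝ))
    (hx : ∀ t, HasDerivAt x (f (x t)) t) (hy : ∀ t, HasDerivAt y (f (y t)) t) :
    ∀ t ≥ (0 : ℝ),
      Real.sqrt ((x t - y t) ⬝ᵥ (P *ᵥ (x t - y t)))
        ≤ Real.exp (c * t) * Real.sqrt ((x 0 - y 0) ⬝ᵥ (P *ᵥ (x 0 - y 0))) :=
  stmt_6_general f P hPsymm c hOSL x y hx hy
end

section
/- Let f : ℝⁿ → ℝⁿ be C¹ and suppose for each z ∈ ℝⁿ, the Jacobian Df(z) lies in the convex hull of finitely many matrices A₁, …, A_k. If there exist P ≻ 0 and c ∈ ℝ with Aᵢᵀ P + P Aᵢ ⪯ 2cP for each i, then (x − y)ᵀ P (f(x) − f(y)) ≤ c (x − y)ᵀ P (x − y) for all x, y ∈ ℝⁿ. -/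
open Matrix Finset

/-!
Write `v = x - y`. Each LMI says `vᵀ P A_i v ≤ c vᵀ P v`; this is a half-space condition on the
matrix, so it passes to every convex combination of the `A_i`, hence to every Jacobian `J z`.
The mean value theorem applied to the scalar function `u ↦ vᵀ P f(u)` on the segment `[y, x]`
writes `vᵀ P (f x - f y)` as `vᵀ P J(z) v` for some `z`.
-/

section

variable {m : Type*} [Fintype m]

theorem Matrix.IsSymm.dotProduct_transpose_mulVec_mulVec {P : Matrix m m ℝ} (hP : P.IsSymm)
    (A : Matrix m m ℝ) (v : m → ℝ) :
    v ⬝ᵥ (Aᵀ *ᵥ (P *ᵥ v)) = v ⬝ᵥ (P *ᵥ (A *ᵥ v)) := by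
  rw [dotProduct_mulVec, vecMul_transpose, dotProduct_mulVec, ← mulVec_transpose, hP.eq,
    dotProduct_comm]

theorem dotProduct_mulVec_mulVec_le_of_posSemidef {P A : Matrix m m ℝ} (hP : P.IsSymm) {c : ℝ}
    (hA : ((2 * c) • P - (Aᵀ * P + P * A)).PosSemidef) (v : m → ℝ) :
    v ⬝ᵥ (P *ᵥ (A *ᵥ v)) ≤ c * (v ⬝ᵥ (P *ᵥ v)) := by
  have h := hA.dotProduct_mulVec_nonneg v
  rw [star_trivial, sub_mulVec, add_mulVec, smul_mulVec, ← mulVec_mulVec, ← mulVec_mulVec,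
    dotProduct_sub, dotProduct_add, dotProduct_smul, smul_eq_mul,
    hP.dotProduct_transpose_mulVec_mulVec] at h
  linarith

theorem convex_setOf_dotProduct_mulVec_mulVec_le (P : Matrix m m ℝ) (v : m → ℝ) (b : ℝ) :
    Convex ℝ {M : Matrix m m ℝ | v ⬝ᵥ (P *ᵥ (M *ᵥ v)) ≤ b} :=
  convex_halfSpace_le
    ⟨fun M N => by rw [add_mulVec, mulVec_add, dotProduct_add],
     fun r M => by rw [smul_mulVec, mulVec_smul, dotProduct_smul]⟩ b

end

theorem stmt_12_general {n k : ℕ} (f : (Fin n → ℝ) → (Fin n → ℝ))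
    (J : (Fin n → ℝ) → Matrix (Fin n) (Fin n) ℝ)
    (hf : ∀ z, HasFDerivAt f ((J z).mulVecLin).toContinuousLinearMap z)
    (A : Fin k → Matrix (Fin n) (Fin n) ℝ)
    (hconv : ∀ z, ∃ w : Fin k → ℝ, (∀ i, 0 ≤ w i) ∧ (∑ i, w i) = 1 ∧
      J z = ∑ i, w i • A i)
    (P : Matrix (Fin n) (Fin n) ℝ) (hPsymm : P.IsSymm) (c : ℝ)
    (hLMI : ∀ i, ((2 * c) • P - ((A i)ᵀ * P + P * (A i))).PosSemidef) :
    ∀ x y : Fin n → ℝ,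
      (x - y) ⬝ᵥ (P *ᵥ (f x - f y)) ≤ c * ((x - y) ⬝ᵥ (P *ᵥ (x - y))) := by
  intro x y
  set v := x - y
  have hJ (z) : v ⬝ᵥ (P *ᵥ (J z *ᵥ v)) ≤ c * (v ⬝ᵥ (P *ᵥ v)) := by
    obtain ⟨w, hw₀, hw₁, hJz⟩ := hconv z
    rw [hJz]
    exact (convex_setOf_dotProduct_mulVec_mulVec_le P v _).sum_mem (fun i _ => hw₀ i) hw₁
      fun i _ => dotProduct_mulVec_mulVec_le_of_posSemidef hPsymm (hLMI i) v
  let ℓ : (Fin n → ℝ) →L[ℝ] ℝ :=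
    ((dotProductBilin ℝ ℝ v).comp P.mulVecLin).toContinuousLinearMap
  obtain ⟨z, -, hz⟩ := domain_mvt (fun z _ => (ℓ.hasFDerivAt.comp z (hf z)).hasFDerivWithinAt)
    convex_univ (Set.mem_univ y) (Set.mem_univ x)
  have hmvt : v ⬝ᵥ (P *ᵥ (f x - f y)) = v ⬝ᵥ (P *ᵥ (J z *ᵥ v)) := by
    rw [mulVec_sub, dotProduct_sub]
    simpa only [ℓ, LinearMap.coe_toContinuousLinearMap', LinearMap.coe_comp, Function.comp_apply,
      ContinuousLinearMap.comp_apply, mulVecLin_apply, dotProductBilin_apply_apply] using hz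
  exact hmvt ▸ hJ z

/-- Convex-hull method: if the Jacobian of a `C¹` map `f` lies pointwise in
the convex hull of matrices `A₁, …, A_k`, and `P ≻ 0`, `c` satisfy the LMIs
`Aᵢᵀ P + P Aᵢ ⪯ 2cP` for each `i`, then `f` is one-sided Lipschitz with
constant `c` in the `P`-weighted inner product. -/
theorem stmt_12 {n k : ℕ} (f : (Fin n → ℝ) → (Fin n → ℝ))
    (J : (Fin n → ℝ) → Matrix (Fin n) (Fin n) ℝ)
    (hf : ∀ z, HasFDerivAt f ((J z).mulVecLin).toContinuousLinearMap z)
    (hJcont : Continuous J)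
    (A : Fin k → Matrix (Fin n) (Fin n) ℝ)
    (hconv : ∀ z, ∃ w : Fin k → ℝ, (∀ i, 0 ≤ w i) ∧ (∑ i, w i) = 1 ∧
      J z = ∑ i, w i • A i)
    (P : Matrix (Fin n) (Fin n) ℝ) (hPsymm : P.IsSymm) (hP : P.PosDef) (c : ℝ)
    (hLMI : ∀ i, ((2 * c) • P - ((A i)ᵀ * P + P * (A i))).PosSemidef) :
    ∀ x y : Fin n → ℝ,
      (x - y) ⬝ᵥ (P *ᵥ (f x - f y)) ≤ c * ((x - y) ⬝ᵥ (P *ᵥ (x - y))) :=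
  stmt_12_general f J hf A hconv P hPsymm c hLMI
end
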